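/- arXiv:dg-ga/9709004 — 4 statements merged into one kernel-verified Lean document; each statement's English description precedes it below -/
import Mathlib

section
/- Let 𝔤 be a unimodular Lie algebra of dimension 2n (i.e. tr(ad_x) = 0 for all x). If ω = dα is an exact 2-form (Chevalley-Eilenberg differential of a 1-cochain α ∈ 𝔤*) and ω^n ≠ 0, then a contradiction follows; that is, a unimodular Lie algebra admits no exact symplectic form. -/
open scoped TensorProduct

variable {V : Type*} [AddCommGroup V] [Module ℝ V]

noncomputable def wedgeF {k l : ℕ} (f : V [⋀^Fin k]→ₗ[ℝ] ℝ) (g : V [⋀^Fin l]→ₗ[ℝ] ℝ) :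
    V [⋀^Fin (k + l)]→ₗ[ℝ] ℝ :=
  ((TensorProduct.lid ℝ ℝ).toLinearMap.compAlternatingMap (f.domCoprod g)).domDomCongr
    finSumFinEquiv

noncomputable def wpowF (ω : V [⋀^Fin 2]→ₗ[ℝ] ℝ) : (n : ℕ) → V [⋀^Fin (2 * n)]→ₗ[ℝ] ℝ
  | 0 => AlternatingMap.constOfIsEmpty ℝ V (Fin 0) 1
  | n + 1 => wedgeF (wpowF ω n) ω


/-- `F` vanishes whenever `v` occurs among its arguments. -/
def ZeroOn (v : V) {k : ℕ} (F : V [⋀^Fin k]→ₗ[ℝ] ℝ) : Prop :=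
  ∀ (g : Fin k → V) (j : Fin k), g j = v → F g = 0

theorem zeroOn_wedgeF {v : V} {k l : ℕ} {f : V [⋀^Fin k]→ₗ[ℝ] ℝ} {g : V [⋀^Fin l]→ₗ[ℝ] ℝ}
    (hf : ZeroOn v f) (hg : ZeroOn v g) : ZeroOn v (wedgeF f g) := by
  intro x j hj
  set w : (Fin k ⊕ Fin l) → V := x ∘ finSumFinEquiv with hw
  have hwj : w (finSumFinEquiv.symm j) = v := by simp [hw, hj]
  have : (f.domCoprod g) w = 0 := by
    rw [AlternatingMap.domCoprod_apply]
    rw [MultilinearMap.sum_apply]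
    apply Finset.sum_eq_zero
    intro σ _
    induction σ using Quotient.inductionOn' with
    | h σ =>
      rw [AlternatingMap.domCoprod.summand_mk'']
      simp only [MultilinearMap.smul_apply, MultilinearMap.domDomCongr_apply,
        MultilinearMap.domCoprod_apply, AlternatingMap.coe_multilinearMap]
      rcases h : σ.symm (finSumFinEquiv.symm j) with a | a
      · have : (fun i => w (σ (Sum.inl i))) a = v := by
          have : σ (Sum.inl a) = finSumFinEquiv.symm j := by
            rw [← h]; simp
          simp [this, hwj]
        rw [hf _ a this, TensorProduct.zero_tmul, smul_zero]
      · have : (fun i => w (σ (Sum.inr i))) a = v := by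
          have : σ (Sum.inr a) = finSumFinEquiv.symm j := by
            rw [← h]; simp
          simp [this, hwj]
        rw [hg _ a this, TensorProduct.tmul_zero, smul_zero]
  show (TensorProduct.lid ℝ ℝ) ((f.domCoprod g) (x ∘ finSumFinEquiv)) = 0
  rw [← hw, this]; exact (TensorProduct.lid ℝ ℝ).map_zero

theorem zeroOn_wpowF {v : V} {ω : V [⋀^Fin 2]→ₗ[ℝ] ℝ} (hv : ZeroOn v ω) (n : ℕ) (hn : 0 < n) :
    ZeroOn v (wpowF ω n) := by
  induction n with
  | zero => exact absurd hn (lt_irrefl 0)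
  | succ m ih =>
    rcases Nat.eq_zero_or_pos m with hm | hm
    · subst hm
      intro g j hj
      show wedgeF (wpowF ω 0) ω g = 0
      refine zeroOn_wedgeF (v := v) ?_ hv g j hj
      intro g' j' _
      exact absurd j'.2 (by simp)
    · exact zeroOn_wedgeF (ih hm) hv

/-- If some nonzero vector pairs trivially with everything and the dimension is `2n`,
the `n`-th power vanishes. -/
theorem wpow_eq_zero_of_radical [FiniteDimensional ℝ V] {n : ℕ} (hn : 0 < n)
    (hdim : Module.finrank ℝ V = 2 * n) (ω : V [⋀^Fin 2]→ₗ[ℝ] ℝ) {v : V} (hv : v ≠ 0)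
    (hrad : ZeroOn v ω) : wpowF ω n = 0 := by
  ext g
  by_cases hli : LinearIndependent ℝ g
  · have hcard : Fintype.card (Fin (2 * n)) = Module.finrank ℝ V := by simp [hdim]
    have hne : Nonempty (Fin (2 * n)) := ⟨⟨0, by omega⟩⟩
    let b := basisOfLinearIndependentOfCardEqFinrank hli hcard
    have hb : ∀ i, b i = g i := fun i => by
      simp [b, coe_basisOfLinearIndependentOfCardEqFinrank]
    obtain ⟨j, hj⟩ : ∃ j, b.repr v j ≠ 0 := by
      by_contra h
      push_neg at h
      apply hv
      have : b.repr v = 0 := Finsupp.ext h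
      have := congrArg b.repr.symm this
      simpa using this
    set c : Fin (2 * n) → ℝ := fun i => b.repr v i with hc
    have hvsum : v = ∑ i, c i • g i := by
      conv_lhs => rw [← b.sum_repr v]
      exact Finset.sum_congr rfl fun i _ => by rw [hb]
    have key : (wpowF ω n) (Function.update g j v) = 0 :=
      zeroOn_wpowF hrad n hn _ j (Function.update_self j v g)
    rw [hvsum] at key
    rw [AlternatingMap.map_update_sum] at key
    have : ∀ i ∈ Finset.univ, i ≠ j →
        (wpowF ω n) (Function.update g j (c i • g i)) = 0 := by
      intro i _ hij
      rw [AlternatingMap.map_update_smul]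
      rw [(wpowF ω n).map_eq_zero_of_eq (Function.update g j (g i)) (i := i) (j := j)]
      · simp
      · rw [Function.update_of_ne hij, Function.update_self]
      · exact hij
    rw [Finset.sum_eq_single_of_mem j (Finset.mem_univ j) this] at key
    rw [AlternatingMap.map_update_smul, Function.update_eq_self] at key
    have := (smul_eq_zero.mp key).resolve_left hj
    simpa using this
  · simpa using (wpowF ω n).map_linearDependent g hli

noncomputable def oneAlt (α : Module.Dual ℝ V) : V [⋀^Fin 1]→ₗ[ℝ] ℝ :=
  AlternatingMap.ofSubsingleton ℝ V ℝ 0 α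

noncomputable def bilinToAlt (B : V →ₗ[ℝ] V →ₗ[ℝ] ℝ) (hB : ∀ x, B x x = 0) :
    V [⋀^Fin 2]→ₗ[ℝ] ℝ where
  toFun v := B (v 0) (v 1)
  map_update_add' := by
    intro _ v i x y
    fin_cases i <;> simp
  map_update_smul' := by
    intro _ v i c x
    fin_cases i <;> simp
  map_eq_zero_of_eq' := by
    intro v i j hij hne
    have h01 : v 0 = v 1 := by
      fin_cases i <;> fin_cases j <;> simp_all
    show B (v 0) (v 1) = 0
    rw [h01]; exact hB _

variable {L : Type*} [LieRing L] [LieAlgebra ℝ L]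

noncomputable def ceD (α : Module.Dual ℝ L) : L [⋀^Fin 2]→ₗ[ℝ] ℝ :=
  bilinToAlt
    (LinearMap.mk₂ ℝ (fun x y => -α ⁅x, y⁆)
      (fun x x' y => by simp [add_lie]; exact add_comm _ _)
      (fun c x y => by simp [smul_lie])
      (fun x y y' => by simp [lie_add]; exact add_comm _ _)
      (fun c x y => by simp [lie_smul]))
    (fun x => by simp)

/-- closedness of a 2-cochain under the Chevalley–Eilenberg differential -/
def IsCEClosed (ω : L [⋀^Fin 2]→ₗ[ℝ] ℝ) : Prop :=
  ∀ x y z : L, ω ![⁅x, y⁆, z] - ω ![⁅x, z⁆, y] + ω ![⁅y, z⁆, x] = 0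

/-- a unimodular Lie algebra admits no exact symplectic form. -/
theorem stmt2 [FiniteDimensional ℝ L] (n : ℕ) (hn : 0 < n)
    (hdim : Module.finrank ℝ L = 2 * n)
    (hunimod : ∀ x : L, LinearMap.trace ℝ L (LieAlgebra.ad ℝ L x) = 0)
    (α : Module.Dual ℝ L) (hsymp : wpowF (ceD α) n ≠ 0) : False := by
  classical
  set J : L →ₗ[ℝ] Module.Dual ℝ L :=
    LinearMap.mk₂ ℝ (fun x y => -α ⁅x, y⁆)
      (fun x x' y => by simp [add_lie]; exact add_comm _ _)
      (fun c x y => by simp [smul_lie])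
      (fun x y y' => by simp [lie_add]; exact add_comm _ _)
      (fun c x y => by simp [lie_smul]) with hJ
  have hJapp : ∀ x y : L, J x y = -α ⁅x, y⁆ := fun x y => rfl
  have hωapp : ∀ g : Fin 2 → L, (ceD α) g = J (g 0) (g 1) := fun g => rfl
  have hv0' : ∀ (v : L), J v = 0 → ∀ y, α ⁅v, y⁆ = 0 := by
    intro v hv0 y
    have : J v y = 0 := by rw [hv0]; rfl
    rw [hJapp] at this
    linarith
  -- injectivity of J
  have hinj : Function.Injective J := by
    rw [← LinearMap.ker_eq_bot, LinearMap.ker_eq_bot']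
    intro v hv0
    by_contra hv
    apply hsymp
    refine wpow_eq_zero_of_radical hn hdim (ceD α) hv ?_
    intro g j hj
    rw [hωapp]
    fin_cases j
    · rw [show g 0 = v from hj, hJapp, hv0' v hv0]; ring
    · rw [show g 1 = v from hj, hJapp, ← lie_skew, map_neg, hv0' v hv0]; ring
  have hsurj : Function.Surjective J :=
    (LinearMap.injective_iff_surjective_of_finrank_eq_finrank
      (Subspace.dual_finrank_eq).symm).mp hinj
  obtain ⟨H, hH⟩ := hsurj α
  have hHa : ∀ x : L, α ⁅H, x⁆ = -α x := by
    intro x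
    have : J H x = α x := by rw [hH]
    rw [hJapp] at this
    linarith
  -- the operator S
  set S : L →ₗ[ℝ] L := LieAlgebra.ad ℝ L H + (1/2 : ℝ) • LinearMap.id with hS
  have hSapp : ∀ x : L, S x = ⁅H, x⁆ + (1/2 : ℝ) • x := fun x => rfl
  have hsp : ∀ y z : L, J (S y) z = -(J y (S z)) := by
    intro y z
    have hjac : α ⁅H, ⁅y, z⁆⁆ = α ⁅⁅H, y⁆, z⁆ + α ⁅y, ⁅H, z⁆⁆ := by
      rw [← map_add, leibniz_lie]
    have h1 : α ⁅H, ⁅y, z⁆⁆ = -α ⁅y, z⁆ := hHa _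
    rw [hSapp, hSapp]
    simp only [map_add, map_smul, LinearMap.add_apply, LinearMap.smul_apply, hJapp, lie_add,
      add_lie, lie_smul, smul_lie, map_neg, smul_eq_mul]
    linarith [hjac, h1]
  -- conjugation invariance of the trace
  let e : L ≃ₗ[ℝ] Module.Dual ℝ L := LinearEquiv.ofBijective J ⟨hinj, hsurj⟩
  have key : ∀ x : L, J (S x) = -(Module.Dual.transpose (R := ℝ) S) (J x) := by
    intro x; ext z
    simp only [LinearMap.neg_apply, Module.Dual.transpose_apply, LinearMap.comp_apply]
    exact hsp x z
  have hconj : S = e.symm.conj (-(Module.Dual.transpose (R := ℝ) S)) := by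
    ext x
    rw [LinearEquiv.conj_apply_apply, LinearEquiv.symm_symm, LinearEquiv.eq_symm_apply]
    exact key x
  have htr : LinearMap.trace ℝ L S = -LinearMap.trace ℝ L S := by
    have h2 := LinearMap.trace_conj' (-(Module.Dual.transpose (R := ℝ) S)) e.symm
    rw [← hconj] at h2
    have h3 : (LinearMap.trace ℝ (Module.Dual ℝ L)) (-(Module.Dual.transpose (R := ℝ) S)) =
        -(LinearMap.trace ℝ L S) := by
      have := (LinearMap.trace ℝ (Module.Dual ℝ L)).map_neg (Module.Dual.transpose (R := ℝ) S)
      rw [this, LinearMap.trace_transpose']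
    exact h2.trans h3
  have htr0 : LinearMap.trace ℝ L S = 0 := by linarith [htr]
  have htrn : LinearMap.trace ℝ L S = n := by
    rw [hS, map_add, hunimod, map_smul, LinearMap.trace_id, hdim]
    push_cast
    rw [smul_eq_mul]
    ring
  rw [htr0] at htrn
  exact Nat.cast_ne_zero.mpr hn.ne' htrn.symm
end

section
/- Let 𝔥 be a Lie algebra that is an ideal of codimension 1 in 𝔤, so 𝔤 = 𝔥 ⊕ ℝv as vector spaces, and let α ∈ 𝔥* with dα (the Chevalley-Eilenberg differential on 𝔥) a symplectic form on 𝔥 of dimension 2n. Let Π = ker α ⊂ 𝔥 and let w ≠ 0 span the kernel of the restriction of dα to Π. Let α₊ ∈ 𝔤* be the extension of α with α₊(v) = 0. Then α₊ ∧ (d_𝔤 α₊)^n ≠ 0 on 𝔤 if and only if [v, w] ∉ Π. -/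
open scoped TensorProduct

variable {V : Type*} [AddCommGroup V] [Module ℝ V]

variable {L : Type*} [LieRing L] [LieAlgebra ℝ L]

/-!
Write `ω = dα` and `Ω = d_𝔤 α₊`. Since `ω` is nondegenerate there is `h ∈ 𝔥` with
`ω(h, ·) = Ω(v, ·)` on `𝔥`, so `v - h` is `Ω`-orthogonal to `𝔥`; pick also `e ∈ 𝔥` with `α e = 1`.
If `p` is a basis of `Π`, then `(e, p, v - h + α(h) e)` is a basis of `𝔤` on which
`α₊ ∧ Ωⁿ` takes the value `α(h) · ωⁿ(p, e)`, and `ωⁿ(p, e) ≠ 0` as `(p, e)` is a basis of `𝔥`.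
Finally `α₊[v, w] = ω(w, h) = ω(w, e) α(h)` because `w` is in the radical of `ω|Π`,
and `ω(w, e) ≠ 0` by nondegeneracy.
-/

open Equiv AlternatingMap

lemma wedgeF_apply {k l : ℕ} (f : V [⋀^Fin k]→ₗ[ℝ] ℝ) (g : V [⋀^Fin l]→ₗ[ℝ] ℝ)
    (z : Fin (k + l) → V) :
    wedgeF f g z = ∑ σ : Perm.ModSumCongr (Fin k) (Fin l),
      TensorProduct.lid ℝ ℝ (domCoprod.summand f g σ (z ∘ finSumFinEquiv)) := by
  change TensorProduct.lid ℝ ℝ ((f.domCoprod g : MultilinearMap ℝ (fun _ => V) _)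
    (z ∘ finSumFinEquiv)) = _
  rw [domCoprod_coe, _root_.sum_apply, map_sum]

lemma lid_domCoprod_summand_mk {ιa ιb : Type*} [Fintype ιa] [Fintype ιb] [DecidableEq ιa]
    [DecidableEq ιb] (f : V [⋀^ιa]→ₗ[ℝ] ℝ) (g : V [⋀^ιb]→ₗ[ℝ] ℝ) (σ : Perm (ιa ⊕ ιb))
    (z : ιa ⊕ ιb → V) :
    TensorProduct.lid ℝ ℝ (domCoprod.summand f g (Quotient.mk'' σ) z) =
      Perm.sign σ • (f (fun i => z (σ (Sum.inl i))) * g (fun j => z (σ (Sum.inr j)))) := by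
  rw [domCoprod.summand_mk'']
  simp only [_root_.smul_apply, MultilinearMap.domDomCongr_apply,
    MultilinearMap.domCoprod_apply, coe_multilinearMap, map_zsmul_unit, TensorProduct.lid_tmul,
    smul_eq_mul]

lemma wedgeF_compLinearMap {W : Type*} [AddCommGroup W] [Module ℝ W] {k l : ℕ}
    (f : V [⋀^Fin k]→ₗ[ℝ] ℝ) (g : V [⋀^Fin l]→ₗ[ℝ] ℝ) (P : W →ₗ[ℝ] V) :
    (wedgeF f g).compLinearMap P = wedgeF (f.compLinearMap P) (g.compLinearMap P) := by
  ext z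
  rw [compLinearMap_apply, wedgeF_apply, wedgeF_apply]
  refine Finset.sum_congr rfl fun σ _ => ?_
  induction σ using Quotient.inductionOn'
  simp only [lid_domCoprod_summand_mk, Function.comp_apply, compLinearMap_apply]

lemma wpowF_compLinearMap {W : Type*} [AddCommGroup W] [Module ℝ W]
    (ω : V [⋀^Fin 2]→ₗ[ℝ] ℝ) (P : W →ₗ[ℝ] V) (m : ℕ) :
    (wpowF ω m).compLinearMap P = wpowF (ω.compLinearMap P) m := by
  induction m with
  | zero => ext z; simp [wpowF]
  | succ m ih => rw [wpowF, wedgeF_compLinearMap, ih, wpowF]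

/-- Only the identity coset of shuffles survives, because `β` kills every vector but the first. -/
lemma wedgeF_oneAlt_apply_append {l : ℕ} (β : Module.Dual ℝ V) (g : V [⋀^Fin l]→ₗ[ℝ] ℝ)
    (x : V) (p : Fin l → V) (hp : ∀ i, β (p i) = 0) :
    wedgeF (oneAlt β) g (Fin.append ![x] p) = β x * g p := by
  rw [wedgeF_apply]
  refine (Finset.sum_eq_single (Quotient.mk'' 1) (fun σ _ hσ => ?_) (by simp)).trans ?_
  · induction σ using Quotient.inductionOn' with | h σ => ?_
    rw [lid_domCoprod_summand_mk]
    obtain ⟨a, ha⟩ | ⟨j, hj⟩ : (∃ a, σ (Sum.inl 0) = Sum.inl a) ∨ ∃ j, σ (Sum.inl 0) = Sum.inr j := by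
      cases σ (Sum.inl 0) <;> simp
    · refine absurd ((QuotientGroup.eq (s := (Perm.sumCongrHom _ _).range)).mpr ?_) hσ
      rw [mul_one]
      refine inv_mem (Perm.mem_sumCongrHom_range_of_perm_mapsTo_inl ?_)
      rintro _ ⟨i, rfl⟩
      rw [Subsingleton.elim i 0, ha]
      exact ⟨a, rfl⟩
    · simp [oneAlt, hj, hp]
  · rw [lid_domCoprod_summand_mk]
    simp only [Perm.sign_one, oneAlt, Perm.coe_one, id_eq, Function.comp_apply,
      finSumFinEquiv_apply_left, Fin.append_left, Matrix.cons_val_fin_one,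
      ofSubsingleton_apply_apply, finSumFinEquiv_apply_right, Fin.append_right, one_smul]

lemma AlternatingMap.map_pair_swap (ω : V [⋀^Fin 2]→ₗ[ℝ] ℝ) (x y : V) : ω ![x, y] = -ω ![y, x] := by
  rw [← ω.map_swap ![y, x] (i := 0) (j := 1) (by decide)]
  congr 1
  ext i
  fin_cases i <;> rfl

lemma AlternatingMap.compLinearMap_apply_pair {W : Type*} [AddCommGroup W] [Module ℝ W]
    (ω : V [⋀^Fin 2]→ₗ[ℝ] ℝ) (f : W →ₗ[ℝ] V) (x y : W) :
    ω.compLinearMap f ![x, y] = ω ![f x, f y] := by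
  rw [compLinearMap_apply]
  congr 1
  ext i
  fin_cases i <;> rfl

def AlternatingMap.flat (ω : V [⋀^Fin 2]→ₗ[ℝ] ℝ) : V →ₗ[ℝ] Module.Dual ℝ V :=
  LinearMap.mk₂ ℝ (fun x y => ω ![x, y])
    (fun _ _ _ => ω.map_vecCons_add _ _ _) (fun _ _ _ => ω.map_vecCons_smul _ _ _)
    (fun x _ _ => (ω.curryLeft x).map_vecCons_add _ _ _)
    (fun _ x _ => (ω.curryLeft x).map_vecCons_smul _ _ _)

@[simp]
lemma AlternatingMap.flat_apply_apply (ω : V [⋀^Fin 2]→ₗ[ℝ] ℝ) (x y : V) : flat ω x y = ω ![x, y] := rfl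

lemma AlternatingMap.apply_ne_zero_iff_of_linearIndependent [FiniteDimensional ℝ V] {k : ℕ}
    (f : V [⋀^Fin k]→ₗ[ℝ] ℝ) {z : Fin k → V} (hz : LinearIndependent ℝ z)
    (hk : Module.finrank ℝ V = k) : f z ≠ 0 ↔ f ≠ 0 := by
  have := f.map_basis_ne_zero_iff (basisOfLinearIndependentOfCardEqFinrank' z hz (by simp [hk]))
  rwa [coe_basisOfLinearIndependentOfCardEqFinrank'] at this

/-- Pull back along `ℝ^{2m} → V`, `eᵢ ↦ pᵢ`: there the two 2-forms agree on a basis. -/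
lemma wpowF_apply_eq_of_forall_pair_eq {m : ℕ} {ω₁ ω₂ : V [⋀^Fin 2]→ₗ[ℝ] ℝ}
    {p : Fin (2 * m) → V} (h : ∀ i j, ω₁ ![p i, p j] = ω₂ ![p i, p j]) :
    wpowF ω₁ m p = wpowF ω₂ m p := by
  set φ : (Fin (2 * m) → ℝ) →ₗ[ℝ] V := Fintype.linearCombination ℝ p
  have hφ : ∀ i, φ (Pi.single i 1) = p i := by
    intro i; simp [φ, Fintype.linearCombination_apply_single]
  have hp : p = fun i => φ (Pi.single i 1) := by simp only [hφ]
  have key : ω₁.compLinearMap φ = ω₂.compLinearMap φ := by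
    refine Module.Basis.ext_alternating (Pi.basisFun ℝ (Fin (2 * m))) fun ι _ => ?_
    simp only [compLinearMap_apply, Pi.basisFun_apply, hφ]
    have hι : (fun i => p (ι i)) = ![p (ι 0), p (ι 1)] := by ext i; fin_cases i <;> rfl
    rw [hι, h]
  rw [hp, ← compLinearMap_apply, wpowF_compLinearMap, key, ← wpowF_compLinearMap,
    compLinearMap_apply]

/-- If `p j` is independent of the other entries, collapse it along a projection `π` killing it:
`ω` and `ω ∘ π` agree on all pairs of entries. -/
lemma wpowF_apply_eq_zero_of_forall_pair_eq_zero {m : ℕ} (ω : V [⋀^Fin 2]→ₗ[ℝ] ℝ)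
    {p : Fin (2 * m) → V} (j : Fin (2 * m)) (horth : ∀ i, ω ![p j, p i] = 0) :
    wpowF ω m p = 0 := by
  by_cases hp : LinearIndependent ℝ p
  swap
  · exact map_linearDependent _ p hp
  obtain ⟨ψ, hψW, hψj⟩ := LinearMap.exists_extend_of_notMem 0
    (hp.notMem_span_image (s := {i | i ≠ j}) (x := j) (by simp)) (1 : ℝ)
  have hψ : ∀ i ≠ j, ψ (p i) = 0 := fun i hi =>
    congr($hψW ⟨p i, Submodule.subset_span ⟨i, hi, rfl⟩⟩)
  set π : V →ₗ[ℝ] V := LinearMap.id - ψ.smulRight (p j)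
  have hπj : π (p j) = 0 := by simp [π, hψj]
  have hπi : ∀ i ≠ j, π (p i) = p i := fun i hi => by simp [π, hψ i hi]
  have hpair : ∀ a b, ω ![p a, p b] = ω.compLinearMap π ![p a, p b] := by
    intro a b
    rw [compLinearMap_apply_pair]
    rcases eq_or_ne a j with rfl | ha
    · rw [horth, hπj, ω.map_coord_zero 0 (by simp)]
    rcases eq_or_ne b j with rfl | hb
    · rw [map_pair_swap, horth, hπj, ω.map_coord_zero 1 (by simp), neg_zero]
    rw [hπi a ha, hπi b hb]
  rw [wpowF_apply_eq_of_forall_pair_eq hpair, ← wpowF_compLinearMap, compLinearMap_apply]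
  exact map_coord_zero _ j (by simp [hπj])

lemma exists_pair_ne_zero_of_wpowF_ne_zero [FiniteDimensional ℝ V] {m : ℕ}
    (hV : Module.finrank ℝ V = 2 * m) {ω : V [⋀^Fin 2]→ₗ[ℝ] ℝ} (hω : wpowF ω m ≠ 0)
    {x : V} (hx : x ≠ 0) : ∃ y, ω ![x, y] ≠ 0 := by
  by_contra! hxy
  have hind : LinearIndepOn ℝ id ({x} : Set V) := .singleton hx
  let b₀ := Module.Basis.extend hind
  let e := b₀.indexEquiv (Module.finBasisOfFinrankEq ℝ V hV)
  have hbx : b₀.reindex e (e ⟨x, hind.subset_extend _ rfl⟩) = x := by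
    simp [b₀]
  apply hω
  rw [← (wpowF ω m).map_basis_eq_zero_iff (b₀.reindex e)]
  exact wpowF_apply_eq_zero_of_forall_pair_eq_zero ω _ fun i => by rw [hbx]; exact hxy _

lemma exists_pair_eq_of_wpowF_ne_zero [FiniteDimensional ℝ V] {m : ℕ}
    (hV : Module.finrank ℝ V = 2 * m) {ω : V [⋀^Fin 2]→ₗ[ℝ] ℝ} (hω : wpowF ω m ≠ 0)
    (f : Module.Dual ℝ V) : ∃ h, ∀ y, ω ![h, y] = f y := by
  have hinj : Function.Injective (flat ω) := by
    rw [← LinearMap.ker_eq_bot, Submodule.eq_bot_iff]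
    intro x hx
    by_contra hx0
    obtain ⟨y, hy⟩ := exists_pair_ne_zero_of_wpowF_ne_zero hV hω hx0
    exact hy congr($hx y)
  obtain ⟨h, rfl⟩ := (LinearMap.injective_iff_surjective_of_finrank_eq_finrank
    (Subspace.dual_finrank_eq (K := ℝ) (V := V)).symm).mp hinj f
  exact ⟨h, fun y => rfl⟩

lemma apply_pair_eq_mul_of_forall_ker {ω : V [⋀^Fin 2]→ₗ[ℝ] ℝ} {α : Module.Dual ℝ V} {w e : V}
    (hker : ∀ u, α u = 0 → ω ![w, u] = 0) (he : α e = 1) (y : V) :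
    ω ![w, y] = ω ![w, e] * α y := by
  have := hker (y - α y • e) (by simp [he])
  simpa [← flat_apply_apply, sub_eq_zero, mul_comm] using this

lemma exists_sub_orthogonal {W : Submodule ℝ V} [FiniteDimensional ℝ W] {m : ℕ}
    (hW : Module.finrank ℝ W = 2 * m) {Ω : V [⋀^Fin 2]→ₗ[ℝ] ℝ}
    (hΩ : wpowF (Ω.compLinearMap W.subtype) m ≠ 0) (v : V) :
    ∃ h : W, ∀ y : W, Ω ![v - h, y] = 0 := by
  obtain ⟨h, hh⟩ := exists_pair_eq_of_wpowF_ne_zero hW hΩ (flat Ω v ∘ₗ W.subtype)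
  refine ⟨h, fun y => ?_⟩
  have := hh y
  rw [compLinearMap_apply_pair] at this
  rw [← flat_apply_apply, map_sub, LinearMap.sub_apply, sub_eq_zero]
  exact this.symm

lemma wpowF_apply_snoc_add_smul {m : ℕ} (ω : V [⋀^Fin 2]→ₗ[ℝ] ℝ) (p : Fin (2 * m + 1) → V)
    {x : V} (hx : ∀ i, ω ![x, p i] = 0) (c : ℝ) (e : V) :
    wpowF ω (m + 1) (Fin.snoc p (x + c • e)) = c * wpowF ω (m + 1) (Fin.snoc p e) := by
  have hx0 : wpowF ω (m + 1) (Fin.snoc p x) = 0 := by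
    refine wpowF_apply_eq_zero_of_forall_pair_eq_zero ω (Fin.last _) fun i => ?_
    induction i using Fin.lastCases with
    | last => simpa using ω.map_eq_zero_of_eq ![x, x] (i := 0) (j := 1) rfl (by decide)
    | cast i => simpa using hx i
  rw [← coe_multilinearMap, MultilinearMap.snoc_add, MultilinearMap.snoc_smul]
  simp [hx0]

lemma notMem_span_range_of_forall_mem {ι : Type*} {S : Submodule ℝ V} {f : ι → V} {x : V}
    (hf : ∀ i, f i ∈ S) (hx : x ∉ S) : x ∉ Submodule.span ℝ (Set.range f) :=
  fun hmem => hx (Submodule.span_le.mpr (Set.range_subset_iff.mpr hf) hmem)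

theorem wedgeF_oneAlt_wpowF_ne_zero_iff [FiniteDimensional ℝ V] {m : ℕ} {W : Submodule ℝ V}
    (hW : Module.finrank ℝ W = 2 * (m + 1)) (hV : Module.finrank ℝ V = 2 * (m + 1) + 1)
    {Ω : V [⋀^Fin 2]→ₗ[ℝ] ℝ} (hΩ : wpowF (Ω.compLinearMap W.subtype) (m + 1) ≠ 0)
    {β : Module.Dual ℝ V} {v : V} (hv : v ∉ W) (hβv : β v = 0) {e h : W} (he : β e = 1)
    (hh : ∀ y : W, Ω ![v - h, y] = 0) :
    wedgeF (oneAlt β) (wpowF Ω (m + 1)) ≠ 0 ↔ β h ≠ 0 := by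
  set K := LinearMap.ker (β ∘ₗ W.subtype)
  have hK : Module.finrank ℝ K = 2 * m + 1 := by
    have : Module.finrank ℝ K + 1 = Module.finrank ℝ W :=
      Module.Dual.finrank_ker_add_one_of_ne_zero fun h0 => by simpa [he] using congr($h0 e)
    omega
  let b := Module.finBasisOfFinrankEq ℝ K hK
  let pW : Fin (2 * m + 1) → W := K.subtype ∘ b
  let p : Fin (2 * m + 1) → V := W.subtype ∘ pW
  have hβp : ∀ i, β (p i) = 0 := fun i => (b i).2
  set vh : V := v - h + β h • (e : V)
  have hβvh : β vh = 0 := by simp [vh, hβv, he]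
  have hβsnoc : ∀ i, β (Fin.snoc (α := fun _ => V) p vh i) = 0 := by
    intro i
    induction i using Fin.lastCases <;> simp [hβvh, hβp]
  have hval : wedgeF (oneAlt β) (wpowF Ω (m + 1)) (Fin.append ![(e : V)] (Fin.snoc p vh))
      = β h * wpowF Ω (m + 1) (Fin.snoc p e) := by
    rw [wedgeF_oneAlt_apply_append _ _ _ _ hβsnoc, he, one_mul]
    exact wpowF_apply_snoc_add_smul Ω p (fun i => hh (pW i)) _ _
  have hpe : wpowF Ω (m + 1) (Fin.snoc p e) ≠ 0 := by
    have hli : LinearIndependent ℝ (Fin.snoc pW e) := linearIndependent_finSnoc.mpr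
      ⟨b.linearIndependent.map' K.subtype K.ker_subtype,
        notMem_span_range_of_forall_mem (S := K) (fun i => (b i).2) (by simp [K, he])⟩
    rw [← (wpowF _ _).apply_ne_zero_iff_of_linearIndependent hli hW,
      ← wpowF_compLinearMap, compLinearMap_apply] at hΩ
    convert hΩ using 2
    exact (Fin.comp_snoc _ _ _).symm
  have hli : LinearIndependent ℝ (Fin.append ![(e : V)] (Fin.snoc p vh)) := by
    rw [Fin.append_left_eq_cons]
    refine LinearIndependent.comp (linearIndependent_finCons.mpr ⟨?_, ?_⟩) _ (Fin.cast_injective _)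
    · have hvh : vh ∉ W := by
        simpa [vh, W.add_mem_iff_left (W.smul_mem _ e.2), W.sub_mem_iff_left h.2] using hv
      exact linearIndependent_finSnoc.mpr
        ⟨(b.linearIndependent.map' K.subtype K.ker_subtype).map' W.subtype W.ker_subtype,
          notMem_span_range_of_forall_mem (fun i => (pW i).2) hvh⟩
    · exact notMem_span_range_of_forall_mem (S := LinearMap.ker β) hβsnoc (by simp [he])
  rw [← (wedgeF _ _).apply_ne_zero_iff_of_linearIndependent hli (by rw [hV]; ring), hval]
  simp [hpe]

lemma ceD_apply_pair (α : Module.Dual ℝ L) (x y : L) : ceD α ![x, y] = -α ⁅x, y⁆ := rfl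

lemma ceD_compLinearMap_subtype {H : LieIdeal ℝ L} {α : Module.Dual ℝ H} {αp : Module.Dual ℝ L}
    (hres : ∀ x : H, αp x = α x) :
    (ceD αp).compLinearMap H.toSubmodule.subtype = ceD α := by
  ext z
  exact congrArg Neg.neg (hres ⁅(show H from z 0), (show H from z 1)⁆)

theorem stmt5_general [FiniteDimensional ℝ L] (n : ℕ) (hn : 0 < n) (H : LieIdeal ℝ L)
    (hH : Module.finrank ℝ H = 2 * n) (hL : Module.finrank ℝ L = 2 * n + 1)
    (v : L) (hv : v ∉ H)
    (α : Module.Dual ℝ H) (hsymp : wpowF (ceD α) n ≠ 0)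
    (w : H) (hw0 : w ≠ 0)
    (hker : ∀ u : H, α u = 0 → ceD α ![w, u] = 0)
    (αp : Module.Dual ℝ L) (hres : ∀ x : H, αp x = α x) (hαpv : αp v = 0) :
    wedgeF (oneAlt αp) (wpowF (ceD αp) n) ≠ 0 ↔ αp ⁅v, (w : L)⁆ ≠ 0 := by
  obtain ⟨m, rfl⟩ : ∃ m, n = m + 1 := ⟨n - 1, by omega⟩
  have hω := ceD_compLinearMap_subtype hres
  obtain ⟨y, hy⟩ := exists_pair_ne_zero_of_wpowF_ne_zero hH hsymp hw0
  obtain ⟨e, he⟩ : ∃ e : H, α e = 1 := by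
    have hαy : α y ≠ 0 := fun h0 => hy (hker y h0)
    exact ⟨(α y)⁻¹ • y, by simp [hαy]⟩
  have hrad := apply_pair_eq_mul_of_forall_ker hker he
  obtain ⟨h, hh⟩ := exists_sub_orthogonal hH (hω ▸ hsymp) v
  have hc : αp ⁅v, (w : L)⁆ = ceD α ![w, h] := by
    have := hh w
    rw [ceD_apply_pair, sub_lie, map_sub, neg_eq_zero, sub_eq_zero] at this
    rw [this, ← hω, compLinearMap_apply_pair, ceD_apply_pair, ← lie_skew, map_neg]
    rfl
  have hwe : ceD α ![w, e] ≠ 0 := left_ne_zero_of_mul (hrad y ▸ hy)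
  rw [wedgeF_oneAlt_wpowF_ne_zero_iff hH (by rw [hL]) (hω ▸ hsymp) hv hαpv (by rw [hres, he]) hh,
    hc, hrad, hres]
  simp [hwe]

/-- contactization of an exact symplectic Lie algebra. -/
theorem stmt5 [FiniteDimensional ℝ L] (n : ℕ) (hn : 0 < n) (H : LieIdeal ℝ L)
    (hH : Module.finrank ℝ H = 2 * n) (hL : Module.finrank ℝ L = 2 * n + 1)
    (v : L) (hv : v ∉ H)
    (α : Module.Dual ℝ H) (hsymp : wpowF (ceD α) n ≠ 0)
    (w : H) (hw0 : w ≠ 0) (hwPi : α w = 0)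
    (hker : ∀ u : H, α u = 0 → ceD α ![w, u] = 0)
    (αp : Module.Dual ℝ L) (hres : ∀ x : H, αp x = α x) (hαpv : αp v = 0) :
    wedgeF (oneAlt αp) (wpowF (ceD αp) n) ≠ 0 ↔ αp ⁅v, (w : L)⁆ ≠ 0 :=
  stmt5_general n hn H hH hL v hv α hsymp w hw0 hker αp hres hαpv
end

section
/- Every 3-dimensional real Lie algebra 𝔤 is contact (i.e. admits α ∈ 𝔤* with α ∧ dα ≠ 0), except for the abelian Lie algebra and the Lie algebra with basis x, y, z and brackets [x,z] = x, [y,z] = y, [x,y] = 0. -/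
open scoped TensorProduct

variable {V : Type*} [AddCommGroup V] [Module ℝ V]

variable {L : Type*} [LieRing L] [LieAlgebra ℝ L]

/-!
Expanding the wedge product gives
`(α ∧ dα)(u, v, w) = -(α u * α ⁅v, w⁆ + α v * α ⁅w, u⁆ + α w * α ⁅u, v⁆)`.
If `⁅u, v⁆ ∉ span {u, v}`, a form vanishing on `u` and `v` but not on `⁅u, v⁆` is contact.
Otherwise every plane is a subalgebra, and comparing coordinates of `⁅e i, e j + e k⁆` in a
basis shows that `⁅u, v⁆ = g u • v - g v • u` for a linear form `g`; conversely, for such a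
bracket every `α ∧ dα` vanishes. In dimension 3 this algebra is abelian if `g = 0`, and
otherwise a basis `x, y` of `ker g` together with `z` such that `g z = -1` exhibits it as
`⟨x, y, z | [x,z] = x, [y,z] = y, [x,y] = 0⟩`.
-/

namespace Equiv.Perm

variable {α β : Type*} [Unique α] [Finite β]

lemma mem_sumCongrHom_range_iff_apply_inl_default (σ : Perm (α ⊕ β)) :
    σ ∈ (sumCongrHom α β).range ↔ σ (Sum.inl default) = Sum.inl default := by
  constructor
  · rintro ⟨⟨s, t⟩, rfl⟩
    simp [Unique.eq_default (s default)]
  · intro h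
    apply mem_sumCongrHom_range_of_perm_mapsTo_inl
    rintro _ ⟨a, rfl⟩
    rw [Unique.eq_default a, h]
    exact Set.mem_range_self _

def modSumCongrEquivOfUnique [DecidableEq α] [DecidableEq β] : ModSumCongr α β ≃ α ⊕ β where
  toFun := Quotient.lift (fun σ => σ (Sum.inl default)) fun σ τ h => by
    have := (mem_sumCongrHom_range_iff_apply_inl_default _).1 (QuotientGroup.leftRel_apply.1 h)
    rw [Perm.mul_apply, Perm.inv_def, Equiv.symm_apply_eq] at this
    exact this.symm
  invFun i := Quotient.mk'' (swap (Sum.inl default) i)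
  left_inv := Quotient.ind fun σ => Quotient.sound <| QuotientGroup.leftRel_apply.2 <|
    (mem_sumCongrHom_range_iff_apply_inl_default _).2 (by simp)
  right_inv i := swap_apply_left _ _

@[simp]
lemma modSumCongrEquivOfUnique_symm_apply [DecidableEq α] [DecidableEq β] (i : α ⊕ β) :
    modSumCongrEquivOfUnique.symm i = Quotient.mk'' (swap (Sum.inl default) i) := rfl

end Equiv.Perm

lemma oneAlt_apply (α : Module.Dual ℝ V) (v : Fin 1 → V) : oneAlt α v = α (v 0) := rfl

lemma ceD_apply (α : Module.Dual ℝ L) (v : Fin 2 → L) : ceD α v = -α ⁅v 0, v 1⁆ := rfl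

lemma wedgeF_oneAlt_ceD_apply (α : Module.Dual ℝ L) (v : Fin 3 → L) :
    wedgeF (oneAlt α) (ceD α) v =
      -(α (v 0) * α ⁅v 1, v 2⁆ + α (v 1) * α ⁅v 2, v 0⁆ + α (v 2) * α ⁅v 0, v 1⁆) := by
  simp only [wedgeF, AlternatingMap.domDomCongr_apply, LinearMap.compAlternatingMap_apply,
    AlternatingMap.domCoprod_apply, sum_apply, map_sum]
  rw [← Equiv.sum_comp Equiv.Perm.modSumCongrEquivOfUnique.symm, Fintype.sum_sum_type]
  have h0 : finSumFinEquiv (Sum.inl 0 : Fin 1 ⊕ Fin 2) = 0 := rfl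
  have h1 : finSumFinEquiv (Sum.inr 0 : Fin 1 ⊕ Fin 2) = 1 := rfl
  have h2 : finSumFinEquiv (Sum.inr 1 : Fin 1 ⊕ Fin 2) = 2 := rfl
  rw [← lie_skew (v 2) (v 0), ← lie_skew (v 0) (v 1)]
  simp [AlternatingMap.domCoprod.summand_mk'', oneAlt_apply, ceD_apply, Equiv.swap_apply_of_ne_of_ne,
    h0, h1, h2, -lie_skew, add_assoc, add_comm]

lemma wedgeF_oneAlt_ceD_eq_zero_of_lie_eq {g : Module.Dual ℝ L}
    (hg : ∀ u v : L, ⁅u, v⁆ = g u • v - g v • u) (α : Module.Dual ℝ L) :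
    wedgeF (oneAlt α) (ceD α) = 0 := by
  ext v
  simp only [wedgeF_oneAlt_ceD_apply, hg, map_sub, map_smul, smul_eq_mul,
    AlternatingMap.zero_apply]
  ring

lemma lie_mem_span_pair_of_forall_wedgeF_oneAlt_ceD_eq_zero
    (h : ∀ α : Module.Dual ℝ L, wedgeF (oneAlt α) (ceD α) = 0) (u v : L) :
    ⁅u, v⁆ ∈ Submodule.span ℝ {u, v} := by
  by_contra hmem
  obtain ⟨α, hα, hle⟩ := Submodule.exists_le_ker_of_notMem hmem
  have hu : α u = 0 := hle (Submodule.subset_span (by simp))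
  have hv : α v = 0 := hle (Submodule.subset_span (by simp))
  have := congr($(h α) ![u, v, ⁅u, v⁆])
  exact hα (by simpa [wedgeF_oneAlt_ceD_apply, hu, hv] using this)

section

open Module

variable {K : Type*} [Field K]

lemma exists_linearIndependent_of_dual_ne_zero {E : Type*} [AddCommGroup E] [Module K E]
    (hdim : finrank K E = 3) {g : Dual K E} (hg : g ≠ 0) :
    ∃ x y z : E, LinearIndependent K ![x, y, z] ∧ g x = 0 ∧ g y = 0 ∧ g z = -1 := by
  have : Module.Finite K E := finite_of_finrank_eq_succ hdim
  obtain ⟨z, hz⟩ := LinearMap.surjective hg (-1)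
  have hker : finrank K (LinearMap.ker g) = 2 := by
    have := Dual.finrank_ker_add_one_of_ne_zero hg
    omega
  let kb := finBasisOfFinrankEq K (LinearMap.ker g) hker
  have hxy : LinearIndependent K ![(kb 0 : E), kb 1] := by
    have hcomp : (LinearMap.ker g).subtype ∘ kb = ![(kb 0 : E), kb 1] := by
      ext i; fin_cases i <;> rfl
    simpa only [hcomp] using kb.linearIndependent.map' _ (LinearMap.ker g).ker_subtype
  have hz_notMem : z ∉ Submodule.span K (Set.range ![(kb 0 : E), kb 1]) := by
    intro hmem
    have hle : Submodule.span K (Set.range ![(kb 0 : E), kb 1]) ≤ LinearMap.ker g := by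
      rw [Submodule.span_le, Set.range_subset_iff]
      intro i; fin_cases i <;> simp
    simpa [hz] using hle hmem
  refine ⟨kb 0, kb 1, z, ?_, (kb 0).2, (kb 1).2, hz⟩
  have : ![(kb 0 : E), kb 1, z] = Fin.snoc ![(kb 0 : E), kb 1] z := by
    ext i; fin_cases i <;> rfl
  rw [this, linearIndependent_finSnoc]
  exact ⟨hxy, hz_notMem⟩

variable {𝔤 : Type*} [LieRing 𝔤] [LieAlgebra K 𝔤]

lemma lie_eq_smul_sub_smul_of_basis {ι : Type*} (b : Basis ι K 𝔤) (g : Dual K 𝔤)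
    (h : ∀ i j, ⁅b i, b j⁆ = g (b i) • b j - g (b j) • b i) (u v : 𝔤) :
    ⁅u, v⁆ = g u • v - g v • u := by
  have key : (LieAlgebra.ad K 𝔤 : 𝔤 →ₗ[K] 𝔤 →ₗ[K] 𝔤) =
      (LinearMap.lsmul K 𝔤).comp g - (LinearMap.lsmul K 𝔤).flip.compl₂ g :=
    b.ext fun i => b.ext fun j => by simpa using h i j
  simpa using LinearMap.congr_fun₂ key u v

section

variable (h : ∀ u v : 𝔤, ⁅u, v⁆ ∈ Submodule.span K {u, v})
include h

section

variable {ι : Type*} (b : Basis ι K 𝔤)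

lemma Module.Basis.coord_lie_eq_zero {i j k : ι} (hki : k ≠ i) (hkj : k ≠ j) :
    b.coord k ⁅b i, b j⁆ = 0 := by
  have hle : Submodule.span K {b i, b j} ≤ LinearMap.ker (b.coord k) := by
    rw [Submodule.span_le, Set.insert_subset_iff, Set.singleton_subset_iff]
    simp [hki.symm, hkj.symm]
  exact hle (h _ _)

lemma Module.Basis.coord_lie_eq_coord_lie {i j k : ι} (hji : j ≠ i) (hki : k ≠ i) (hjk : j ≠ k) :
    b.coord j ⁅b i, b j⁆ = b.coord k ⁅b i, b k⁆ := by
  have hEq : Set.EqOn (b.coord j) (b.coord k) {b i, b j + b k} := by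
    rintro _ (rfl | rfl) <;> simp [hji, hki, hjk, hjk.symm]
  calc b.coord j ⁅b i, b j⁆ = b.coord j ⁅b i, b j + b k⁆ := by
        rw [lie_add, map_add, b.coord_lie_eq_zero h hji hjk, add_zero]
    _ = b.coord k ⁅b i, b j + b k⁆ := LinearMap.eqOn_span hEq (h _ _)
    _ = b.coord k ⁅b i, b k⁆ := by
        rw [lie_add, map_add, b.coord_lie_eq_zero h hki hjk.symm, zero_add]

lemma Module.Basis.exists_coord_lie_eq (i : ι) : ∃ c : K, ∀ j ≠ i, b.coord j ⁅b i, b j⁆ = c := by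
  by_cases hi : ∃ j₀, j₀ ≠ i
  · obtain ⟨j₀, hj₀⟩ := hi
    refine ⟨b.coord j₀ ⁅b i, b j₀⁆, fun j hj => ?_⟩
    rcases eq_or_ne j j₀ with rfl | hjj₀
    · rfl
    · exact b.coord_lie_eq_coord_lie h hj hj₀ hjj₀
  · exact ⟨0, fun j hj => absurd (not_exists_not.1 hi j) hj⟩

end

lemma exists_dual_lie_eq_smul_sub_smul_of_lie_mem_span_pair :
    ∃ g : Dual K 𝔤, ∀ u v : 𝔤, ⁅u, v⁆ = g u • v - g v • u := by
  let b := Basis.ofVectorSpace K 𝔤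
  choose c hc using b.exists_coord_lie_eq h
  refine ⟨b.constr K c, lie_eq_smul_sub_smul_of_basis b _ fun i j => ?_⟩
  rcases eq_or_ne i j with rfl | hij
  · simp
  refine b.ext_elem fun k => ?_
  rw [← b.coord_apply]
  simp only [b.constr_basis, map_sub, map_smul, Basis.repr_self, Finsupp.sub_apply,
    Finsupp.smul_apply, smul_eq_mul]
  rcases eq_or_ne k j with rfl | hkj
  · simp [hc i k hij.symm, hij]
  rcases eq_or_ne k i with rfl | hki
  · rw [← lie_skew, map_neg, hc j k hij]
    simp [hkj]
  · simp [b.coord_lie_eq_zero h hki hkj, hki, hkj]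

end

lemma exists_dual_lie_eq_smul_sub_smul_iff (hdim : finrank K 𝔤 = 3) :
    (∃ g : Dual K 𝔤, ∀ u v : 𝔤, ⁅u, v⁆ = g u • v - g v • u) ↔
      IsLieAbelian 𝔤 ∨ ∃ x y z : 𝔤, LinearIndependent K ![x, y, z] ∧
        ⁅x, z⁆ = x ∧ ⁅y, z⁆ = y ∧ ⁅x, y⁆ = 0 := by
  constructor
  · rintro ⟨g, hg⟩
    rcases eq_or_ne g 0 with rfl | hg0
    · exact Or.inl ⟨fun u v => by simpa using hg u v⟩
    obtain ⟨x, y, z, hli, hx, hy, hz⟩ := exists_linearIndependent_of_dual_ne_zero hdim hg0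
    exact Or.inr ⟨x, y, z, hli, by simp [hg, hx, hz], by simp [hg, hy, hz], by simp [hg, hx, hy]⟩
  · rintro (habel | ⟨x, y, z, hli, hxz, hyz, hxy⟩)
    · exact ⟨0, fun u v => by simp [trivial_lie_zero]⟩
    let b := basisOfLinearIndependentOfCardEqFinrank hli (by simp [hdim])
    have hb : ⇑b = ![x, y, z] := coe_basisOfLinearIndependentOfCardEqFinrank _ _
    refine ⟨-b.coord 2, lie_eq_smul_sub_smul_of_basis b _ fun i j => ?_⟩
    have hg : ∀ i, (-b.coord 2) (b i) = if i = 2 then -1 else 0 := fun i => by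
      rw [LinearMap.neg_apply, Basis.coord_apply, Basis.repr_self, Finsupp.single_apply]
      split_ifs <;> simp
    have hzx : ⁅z, x⁆ = -x := by rw [← lie_skew, hxz]
    have hzy : ⁅z, y⁆ = -y := by rw [← lie_skew, hyz]
    have hyx : ⁅y, x⁆ = 0 := by rw [← lie_skew, hxy, neg_zero]
    rw [hg, hg, hb]
    fin_cases i <;> fin_cases j <;> simp [hxz, hyz, hxy, hzx, hzy, hyx]

end

lemma forall_wedgeF_oneAlt_ceD_eq_zero_iff :
    (∀ α : Module.Dual ℝ L, wedgeF (oneAlt α) (ceD α) = 0) ↔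
      ∃ g : Module.Dual ℝ L, ∀ u v : L, ⁅u, v⁆ = g u • v - g v • u :=
  ⟨fun h => exists_dual_lie_eq_smul_sub_smul_of_lie_mem_span_pair
      (lie_mem_span_pair_of_forall_wedgeF_oneAlt_ceD_eq_zero h),
    fun ⟨_, hg⟩ => wedgeF_oneAlt_ceD_eq_zero_of_lie_eq hg⟩

theorem stmt7_general (hdim : Module.finrank ℝ L = 3) :
    (∃ α : Module.Dual ℝ L, wedgeF (oneAlt α) (ceD α) ≠ 0) ↔
      (¬ IsLieAbelian L ∧
        ¬ ∃ x y z : L, LinearIndependent ℝ ![x, y, z] ∧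
          ⁅x, z⁆ = x ∧ ⁅y, z⁆ = y ∧ ⁅x, y⁆ = 0) := by
  rw [← not_or, ← exists_dual_lie_eq_smul_sub_smul_iff hdim,
    ← forall_wedgeF_oneAlt_ceD_eq_zero_iff, not_forall]

/-- a 3-dimensional real Lie algebra is contact iff it is neither abelian
nor the algebra ⟨x,y,z | [x,z]=x, [y,z]=y, [x,y]=0⟩. -/
theorem stmt7 [FiniteDimensional ℝ L] (hdim : Module.finrank ℝ L = 3) :
    (∃ α : Module.Dual ℝ L, wedgeF (oneAlt α) (ceD α) ≠ 0) ↔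
      (¬ IsLieAbelian L ∧
        ¬ ∃ x y z : L, LinearIndependent ℝ ![x, y, z] ∧
          ⁅x, z⁆ = x ∧ ⁅y, z⁆ = y ∧ ⁅x, y⁆ = 0) :=
  stmt7_general hdim
end

section
/- Let (V, ω) be a 4-dimensional symplectic vector space and j a complex structure on V (j² = -id) with ω(jX, jY) = -ω(X,Y) for all X, Y. Define θ(X,Y) = ω(jX,Y). Then θ is an alternating 2-form satisfying θ ∧ ω = 0 and θ ∧ θ = ω ∧ ω. Conversely, if θ ∈ Λ²V* satisfies θ ∧ ω = 0 and θ ∧ θ = ω ∧ ω, then the endomorphism j defined by ω(jX,Y) = θ(X,Y) satisfies j² = -id. -/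
open scoped TensorProduct

variable {V : Type*} [AddCommGroup V] [Module ℝ V]

variable {L : Type*} [LieRing L] [LieAlgebra ℝ L]

/-!
In a basis, a 2-form is an alternating 4×4 matrix, and `α ∧ β` evaluated on the basis is the
polarized Pfaffian of the two matrices. The Pfaffian identity
`A · adj B · A = pf(A, B) • A - pf(A) • B` (where `B · adj B = pf(B) • 1`), applied to
`Θ = Jᵀ Ω`, shows that every `j` with `θ = ω(j·, ·)` satisfies the quadratic relation
`(ω ∧ ω) j² - 2 (θ ∧ ω) j + θ ∧ θ = 0`.
When `θ ∧ ω = 0` and `θ ∧ θ = ω ∧ ω` this reads `j² = -1`. Conversely, if `j² = -1` it makes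
`(θ ∧ ω) j` a real multiple of the identity, so `θ ∧ ω = 0` since no real number squares to `-1`,
and then `θ ∧ θ = ω ∧ ω`.
-/

open Equiv
open scoped Matrix

theorem Equiv.Perm.sum_fin_four {M : Type*} [AddCommGroup M]
    (h : Fin 4 → Fin 4 → Fin 4 → Fin 4 → M) :
    ∑ σ : Perm (Fin 4), Perm.sign σ • h (σ 0) (σ 1) (σ 2) (σ 3) =
      h 0 1 2 3 - h 0 1 3 2 - h 0 2 1 3 + h 0 2 3 1 + h 0 3 1 2 - h 0 3 2 1
      - h 1 0 2 3 + h 1 0 3 2 + h 1 2 0 3 - h 1 2 3 0 - h 1 3 0 2 + h 1 3 2 0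
      + h 2 0 1 3 - h 2 0 3 1 - h 2 1 0 3 + h 2 1 3 0 + h 2 3 0 1 - h 2 3 1 0
      - h 3 0 1 2 + h 3 0 2 1 + h 3 1 0 2 - h 3 1 2 0 - h 3 2 0 1 + h 3 2 1 0 := by
  rw [show (1 : Fin 4) = Fin.succ 0 from rfl, show (2 : Fin 4) = Fin.succ (Fin.succ 0) from rfl,
    show (3 : Fin 4) = Fin.succ (Fin.succ (Fin.succ 0)) from rfl]
  simp only [Finset.univ_perm_fin_succ, Finset.sum_map, ← Finset.univ_product_univ,
    Finset.sum_product, Equiv.toEmbedding_apply, Perm.decomposeFin_symm_apply_zero,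
    Perm.decomposeFin_symm_apply_succ, Perm.decomposeFin.symm_sign]
  simp only [Fin.sum_univ_succ, Finset.univ_unique, Finset.sum_singleton]
  simp [Equiv.swap_apply_def, Fin.ext_iff]
  abel

namespace Matrix

variable {R : Type*} [CommRing R]

/-- Alternating matrix; the diagonal condition is not implied by `Aᵀ = -A` in characteristic 2. -/
def IsAlt {n : Type*} (A : Matrix n n R) : Prop := Aᵀ = -A ∧ A.diag = 0

def pfaffian4 (A : Matrix (Fin 4) (Fin 4) R) : R :=
  A 0 1 * A 2 3 - A 0 2 * A 1 3 + A 0 3 * A 1 2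

/-- The polarization: `pfaffian4 (A + B) = pfaffian4 A + pfaffianPolar4 A B + pfaffian4 B`. -/
def pfaffianPolar4 (A B : Matrix (Fin 4) (Fin 4) R) : R :=
  A 0 1 * B 2 3 - A 0 2 * B 1 3 + A 0 3 * B 1 2 + A 1 2 * B 0 3 - A 1 3 * B 0 2 + A 2 3 * B 0 1

def pfaffianAdj4 (B : Matrix (Fin 4) (Fin 4) R) : Matrix (Fin 4) (Fin 4) R :=
  !![0, -B 2 3, B 1 3, -B 1 2;
     B 2 3, 0, -B 0 3, B 0 2;
     -B 1 3, B 0 3, 0, -B 0 1;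
     B 1 2, -B 0 2, B 0 1, 0]

theorem pfaffianPolar4_self (A : Matrix (Fin 4) (Fin 4) R) :
    pfaffianPolar4 A A = 2 * pfaffian4 A := by
  simp only [pfaffianPolar4, pfaffian4]; ring

theorem IsAlt.eq_fin_four {A : Matrix (Fin 4) (Fin 4) R} (hA : A.IsAlt) :
    A = !![0, A 0 1, A 0 2, A 0 3; -A 0 1, 0, A 1 2, A 1 3;
      -A 0 2, -A 1 2, 0, A 2 3; -A 0 3, -A 1 3, -A 2 3, 0] := by
  have hskew (i j : Fin 4) : A j i = -A i j := by simpa using congrFun (congrFun hA.1 i) j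
  have hdiag (i : Fin 4) : A i i = 0 := congrFun hA.2 i
  ext i j
  fin_cases i <;> fin_cases j <;>
    simp [hskew 0 1, hskew 0 2, hskew 0 3, hskew 1 2, hskew 1 3, hskew 2 3, hdiag]

theorem IsAlt.mul_pfaffianAdj4 {B : Matrix (Fin 4) (Fin 4) R} (hB : B.IsAlt) :
    B * pfaffianAdj4 B = pfaffian4 B • 1 := by
  rw [hB.eq_fin_four]
  ext i j
  fin_cases i <;> fin_cases j <;>
    simp [Matrix.mul_apply, Fin.sum_univ_four, pfaffianAdj4, pfaffian4] <;> ring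

theorem IsAlt.mul_pfaffianAdj4_mul {A B : Matrix (Fin 4) (Fin 4) R} (hA : A.IsAlt) (hB : B.IsAlt) :
    A * pfaffianAdj4 B * A = pfaffianPolar4 A B • A - pfaffian4 A • B := by
  rw [hA.eq_fin_four, hB.eq_fin_four]
  ext i j
  fin_cases i <;> fin_cases j <;>
    simp [Matrix.mul_apply, Fin.sum_univ_four, pfaffianAdj4, pfaffian4, pfaffianPolar4] <;> ring

theorem IsAlt.pfaffian4_smul_mul_self_sub_add_eq_zero [NoZeroDivisors R]
    {N Ω : Matrix (Fin 4) (Fin 4) R} (hΩ : Ω.IsAlt) (hNΩ : (N * Ω).IsAlt)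
    (hpf : pfaffian4 Ω ≠ 0) :
    pfaffian4 Ω • (N * N) - pfaffianPolar4 (N * Ω) Ω • N + pfaffian4 (N * Ω) • 1 = 0 := by
  set X := pfaffian4 Ω • (N * N) - pfaffianPolar4 (N * Ω) Ω • N + pfaffian4 (N * Ω) • 1
  have hXΩ : X * Ω = 0 := by
    have h := hNΩ.mul_pfaffianAdj4_mul hΩ
    rw [Matrix.mul_assoc N Ω, hΩ.mul_pfaffianAdj4] at h
    rw [← sub_eq_zero_of_eq h]
    simp only [X, sub_mul, add_mul, Matrix.smul_mul, Matrix.mul_smul, Matrix.mul_one,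
      Matrix.one_mul, Matrix.mul_assoc]
    abel
  have h : pfaffian4 Ω • X = 0 := by
    rw [← Matrix.mul_one X, ← Matrix.mul_smul, ← hΩ.mul_pfaffianAdj4, ← Matrix.mul_assoc, hXΩ,
      Matrix.zero_mul]
  exact (smul_eq_zero.mp h).resolve_left hpf

end Matrix

namespace AlternatingMap

variable {R M N : Type*} [CommRing R] [AddCommGroup M] [Module R M] [AddCommGroup N] [Module R N]

theorem map_vec2_swap (f : M [⋀^Fin 2]→ₗ[R] N) (x y : M) : f ![y, x] = -f ![x, y] := by
  rw [← f.map_swap (v := ![x, y]) zero_ne_one]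
  congr 1
  funext i
  fin_cases i <;> rfl

def toBilin (f : M [⋀^Fin 2]→ₗ[R] N) : M →ₗ[R] M →ₗ[R] N :=
  LinearMap.mk₂ R (fun x y => f ![x, y])
    (fun x x' y => f.map_vecCons_add ![y] x x')
    (fun c x y => f.map_vecCons_smul ![y] c x)
    (fun x y y' => (f.curryLeft x).map_vecCons_add ![] y y')
    (fun c x y => (f.curryLeft x).map_vecCons_smul ![] c y)

@[simp]
theorem toBilin_apply (f : M [⋀^Fin 2]→ₗ[R] N) (x y : M) : f.toBilin x y = f ![x, y] := rfl

theorem isAlt_toMatrix₂_toBilin {n : Type*} [Fintype n] [DecidableEq n] (b : Module.Basis n R M)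
    (f : M [⋀^Fin 2]→ₗ[R] R) : (LinearMap.toMatrix₂ b b f.toBilin).IsAlt := by
  refine ⟨?_, ?_⟩
  · ext i k
    simp [f.map_vec2_swap (b k) (b i)]
  · ext i
    simpa using f.map_eq_zero_of_eq ![b i, b i] (i := 0) (j := 1) rfl zero_ne_one

end AlternatingMap

theorem four_mul_wedgeF_apply (f g : V [⋀^Fin 2]→ₗ[ℝ] ℝ) (v : Fin 4 → V) :
    4 * wedgeF f g v =
      ∑ σ : Perm (Fin 4), Perm.sign σ • (f ![v (σ 0), v (σ 1)] * g ![v (σ 2), v (σ 3)]) := by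
  have key := congrArg (fun m => TensorProduct.lid ℝ ℝ (m (v ∘ finSumFinEquiv)))
    (MultilinearMap.domCoprod_alternization_eq f g)
  simp only [MultilinearMap.alternatization_apply, map_sum, AlternatingMap.smul_apply] at key
  have e0 : (finSumFinEquiv : Fin 2 ⊕ Fin 2 ≃ Fin 4).symm 0 = .inl 0 := by decide
  have e1 : (finSumFinEquiv : Fin 2 ⊕ Fin 2 ≃ Fin 4).symm 1 = .inl 1 := by decide
  have e2 : (finSumFinEquiv : Fin 2 ⊕ Fin 2 ≃ Fin 4).symm 2 = .inr 0 := by decide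
  have e3 : (finSumFinEquiv : Fin 2 ⊕ Fin 2 ≃ Fin 4).symm 3 = .inr 1 := by decide
  calc 4 * wedgeF f g v = TensorProduct.lid ℝ ℝ
        (((Fintype.card (Fin 2)).factorial * (Fintype.card (Fin 2)).factorial) •
          (f.domCoprod g) (v ∘ finSumFinEquiv)) := by
        simp only [wedgeF, AlternatingMap.domDomCongr_apply, LinearMap.compAlternatingMap_apply,
          map_nsmul, Fintype.card_fin, LinearEquiv.coe_coe]
        norm_num [nsmul_eq_mul, Nat.factorial]
    _ = _ := key.symm
    _ = _ := Fintype.sum_equiv (permCongr finSumFinEquiv) _ _ fun σ => by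
        simp [Perm.sign_permCongr, Equiv.permCongr_apply, MultilinearMap.domCoprod_apply,
          e0, e1, e2, e3]
        congr 2 <;> exact (FinVec.etaExpand_eq _).symm

theorem wedgeF_apply_fin_four (f g : V [⋀^Fin 2]→ₗ[ℝ] ℝ) (v : Fin 4 → V) :
    wedgeF f g v =
      f ![v 0, v 1] * g ![v 2, v 3] - f ![v 0, v 2] * g ![v 1, v 3]
      + f ![v 0, v 3] * g ![v 1, v 2] + f ![v 1, v 2] * g ![v 0, v 3]
      - f ![v 1, v 3] * g ![v 0, v 2] + f ![v 2, v 3] * g ![v 0, v 1] := by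
  have h := four_mul_wedgeF_apply f g v
  rw [Perm.sum_fin_four fun a b c d => f ![v a, v b] * g ![v c, v d]] at h
  have hf (a b : Fin 4) := f.map_vec2_swap (v a) (v b)
  have hg (a b : Fin 4) := g.map_vec2_swap (v a) (v b)
  simp only [hf 0 1, hf 0 2, hf 0 3, hf 1 2, hf 1 3, hf 2 3,
    hg 0 1, hg 0 2, hg 0 3, hg 1 2, hg 1 3, hg 2 3] at h
  linarith

section Basis

variable (b : Module.Basis (Fin 4) ℝ V)

theorem wedgeF_apply_basis (f g : V [⋀^Fin 2]→ₗ[ℝ] ℝ) :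
    wedgeF f g b = Matrix.pfaffianPolar4 (LinearMap.toMatrix₂ b b f.toBilin)
      (LinearMap.toMatrix₂ b b g.toBilin) := by
  rw [wedgeF_apply_fin_four]
  simp only [Matrix.pfaffianPolar4, LinearMap.toMatrix₂_apply, AlternatingMap.toBilin_apply]

theorem wedgeF_smul_mul_self_sub_add_eq_zero {ω θ : V [⋀^Fin 2]→ₗ[ℝ] ℝ} {j : Module.End ℝ V}
    (hθ : ∀ X Y, θ ![X, Y] = ω ![j X, Y]) (hω : wedgeF ω ω b ≠ 0) :
    wedgeF ω ω b • (j * j) - (2 * wedgeF θ ω b) • j + wedgeF θ θ b • 1 = 0 := by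
  set Ω := LinearMap.toMatrix₂ b b ω.toBilin
  set J := LinearMap.toMatrix b b j
  have hΘ : LinearMap.toMatrix₂ b b θ.toBilin = Jᵀ * Ω := by
    rw [← LinearMap.toMatrix₂_comp]
    congr 1
    ext X Y
    simp [hθ]
  have hpf : Matrix.pfaffian4 Ω ≠ 0 := by
    rw [wedgeF_apply_basis, Matrix.pfaffianPolar4_self] at hω
    exact right_ne_zero_of_mul hω
  have hq := (ω.isAlt_toMatrix₂_toBilin b).pfaffian4_smul_mul_self_sub_add_eq_zero
    (hΘ ▸ θ.isAlt_toMatrix₂_toBilin b) hpf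
  apply (LinearMap.toMatrix b b).injective
  rw [wedgeF_apply_basis, wedgeF_apply_basis, wedgeF_apply_basis, hΘ]
  have hqT := congrArg Matrix.transpose hq
  simp only [Matrix.transpose_sub, Matrix.transpose_add, Matrix.transpose_smul,
    Matrix.transpose_mul, Matrix.transpose_transpose, Matrix.transpose_one,
    Matrix.transpose_zero] at hqT
  simp only [map_sub, map_add, map_smul, LinearMap.toMatrix_mul, LinearMap.toMatrix_one, map_zero,
    Matrix.pfaffianPolar4_self]
  linear_combination (norm := module) (2 : ℝ) • hqT

end Basis

theorem eq_zero_of_smul_eq_smul_one_of_mul_self_eq_neg_one {A : Type*} [Ring A] [Algebra ℝ A]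
    [Nontrivial A] {j : A} (hj : j * j = -1) {c d : ℝ} (h : c • j = d • 1) : c = 0 ∧ d = 0 := by
  have hinj : Function.Injective fun r : ℝ => r • (1 : A) := by
    simpa only [← Algebra.algebraMap_eq_smul_one] using (algebraMap ℝ A).injective
  by_cases hc : c = 0
  · subst hc
    exact ⟨rfl, hinj (by simpa using h.symm)⟩
  · exfalso
    have hj' : j = (d / c) • 1 := calc
      j = c⁻¹ • c • j := by rw [smul_smul, inv_mul_cancel₀ hc, one_smul]
      _ = (d / c) • 1 := by rw [h, smul_smul, div_eq_inv_mul]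
    have : (d / c) ^ 2 = -1 := hinj <| by
      simpa [hj', sq, smul_smul] using hj
    nlinarith [sq_nonneg (d / c)]

/-- correspondence between anticompatible complex structures and 2-forms θ
with θ∧ω = 0 and θ∧θ = ω∧ω on a 4-dimensional symplectic vector space. -/
theorem stmt15 [FiniteDimensional ℝ V] (h4 : Module.finrank ℝ V = 4)
    (ω : V [⋀^Fin 2]→ₗ[ℝ] ℝ) (hω : wedgeF ω ω ≠ 0) :
    (∀ j : V →ₗ[ℝ] V, (∀ X, j (j X) = -X) →
      (∀ X Y, ω ![j X, j Y] = -ω ![X, Y]) →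
      (∀ X, ω ![j X, X] = 0) ∧
      (∀ θ : V [⋀^Fin 2]→ₗ[ℝ] ℝ, (∀ X Y, θ ![X, Y] = ω ![j X, Y]) →
        wedgeF θ ω = 0 ∧ wedgeF θ θ = wedgeF ω ω)) ∧
    (∀ θ : V [⋀^Fin 2]→ₗ[ℝ] ℝ, wedgeF θ ω = 0 → wedgeF θ θ = wedgeF ω ω →
      ∀ j : V →ₗ[ℝ] V, (∀ X Y, ω ![j X, Y] = θ ![X, Y]) → ∀ X, j (j X) = -X) := by
  have b := Module.finBasisOfFinrankEq ℝ V h4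
  have : Nontrivial V := Module.nontrivial_of_finrank_eq_succ h4
  have hωb : wedgeF ω ω b ≠ 0 := (AlternatingMap.map_basis_ne_zero_iff b _).mpr hω
  refine ⟨fun j hj hjω => ⟨fun X => ?_, fun θ hθ => ?_⟩, fun θ hθω hθθ j hθ X => ?_⟩
  · have h := hjω (j X) X
    rw [hj, ← ω.toBilin_apply, map_neg, LinearMap.neg_apply, ω.toBilin_apply,
      ω.map_vec2_swap] at h
    linarith
  · have hjj : j * j = -1 := LinearMap.ext hj
    obtain ⟨h1, h2⟩ := eq_zero_of_smul_eq_smul_one_of_mul_self_eq_neg_one hjj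
      (c := 2 * wedgeF θ ω b) (d := wedgeF θ θ b - wedgeF ω ω b) <| by
        have hq := wedgeF_smul_mul_self_sub_add_eq_zero b hθ hωb
        rw [hjj] at hq
        linear_combination (norm := module) (-1 : ℝ) • hq
    refine ⟨(AlternatingMap.map_basis_eq_zero_iff b _).mp (by linarith), ?_⟩
    rw [(wedgeF θ θ).eq_smul_basis_det b, (wedgeF ω ω).eq_smul_basis_det b, sub_eq_zero.mp h2]
  · have hq := wedgeF_smul_mul_self_sub_add_eq_zero b (fun X Y => (hθ X Y).symm) hωb
    rw [hθω, hθθ] at hq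
    have hjj : j * j = -1 := by
      have h : wedgeF ω ω b • (j * j + 1) = 0 := by simpa [smul_add] using hq
      exact eq_neg_of_add_eq_zero_left ((smul_eq_zero.mp h).resolve_left hωb)
    exact LinearMap.congr_fun hjj X
end
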